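/- Let G = (V,E) be a finite simple graph, a ∈ V a vertex with N_a ≠ ∅, and fix k ∈ N_a. Then there exist complex numbers c_+ and c_− of modulus 1 such that P_{X,±}^{(a)} |G⟩ = (c_±/√2) |X,±⟩^{(a)} ⊗ U_{a,X,±} |τ_k( τ_a(τ_k(G)) − a )⟩, where U_{a,X,+} = √(+iY)^{(k)} ⊗ ⨂_{b ∈ N_a∖(N_k∪{k})} Z^{(b)} and U_{a,X,−} = √(−iY)^{(k)} ⊗ ⨂_{b ∈ N_k∖(N_a∪{a})} Z^{(b)}, with N_a, N_k the neighborhoods taken in G. -/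

import Mathlib

open scoped BigOperators

noncomputable section

/-- The state space of a collection of qubits indexed by `V`:
amplitudes on computational-basis configurations `V → Bool`. -/
abbrev QState (V : Type*) := (V → Bool) → ℂ

variable {V : Type*}

/-- The inner product `⟨ψ|φ⟩`. -/
def qInner [Fintype V] [DecidableEq V] (ψ φ : QState V) : ℂ :=
  ∑ x, starRingEnd ℂ (ψ x) * φ x

/-- Pauli `X` acting on qubit `a`. -/
def pauliX [DecidableEq V] (a : V) (ψ : QState V) : QState V :=
  fun x => ψ (Function.update x a (!x a))

/-- Pauli `Z` acting on qubit `a`. -/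
def pauliZ (a : V) (ψ : QState V) : QState V :=
  fun x => (if x a then (-1 : ℂ) else 1) * ψ x

/-- Pauli `Y` acting on qubit `a`. -/
def pauliY [DecidableEq V] (a : V) (ψ : QState V) : QState V :=
  fun x => (if x a then Complex.I else -Complex.I) * ψ (Function.update x a (!x a))

/-- The tensor product `⨂_{b ∈ s} Z^{(b)}` of Pauli `Z` over the qubits in `s`. -/
def pauliZProd (s : Finset V) (ψ : QState V) : QState V :=
  fun x => (∏ b ∈ s, if x b then (-1 : ℂ) else 1) * ψ x

/-- A tensor product over the qubits in `s` of the diagonal single-qubit gate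
`diag (f false, f true)`. -/
def diagProd (s : Finset V) (f : Bool → ℂ) (ψ : QState V) : QState V :=
  fun x => (∏ b ∈ s, f (x b)) * ψ x

/-- The sign `(-1)^{x u · x v}` contributed by an edge `{u, v}`. -/
def edgeSign (x : V → Bool) : Sym2 V → ℂ :=
  Sym2.lift ⟨fun a b => if x a && x b then (-1 : ℂ) else 1,
    fun a b => by simp [Bool.and_comm]⟩

/-- The graph state `|G⟩ = (∏_{{u,v}∈E} CZ^{(uv)}) ⨂_v |+⟩^{(v)}` of a finite simple graph,
written out in amplitudes. -/
def graphState [Fintype V] [DecidableEq V] (G : SimpleGraph V) [DecidableRel G.Adj] :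
    QState V :=
  fun x => ((Real.sqrt 2 : ℝ) : ℂ)⁻¹ ^ (Fintype.card V) * ∏ e ∈ G.edgeFinset, edgeSign x e

/-- Local complementation `τ_a(G)` of a graph `G` at the vertex `a`: complement the
adjacency among the neighbors of `a`, leaving all other adjacencies unchanged. -/
def localComp (G : SimpleGraph V) (a : V) : SimpleGraph V where
  Adj u v :=
    (G.Adj a u ∧ G.Adj a v ∧ u ≠ v ∧ ¬ G.Adj u v) ∨
      ((¬ (G.Adj a u ∧ G.Adj a v)) ∧ G.Adj u v)
  symm := by
    refine ⟨?_⟩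
    intro u v h
    rcases h with ⟨h1, h2, h3, h4⟩ | ⟨h1, h2⟩
    · exact Or.inl ⟨h2, h1, h3.symm, fun h => h4 (G.adj_symm h)⟩
    · exact Or.inr ⟨fun h => h1 ⟨h.2, h.1⟩, G.adj_symm h2⟩
  loopless := by
    refine ⟨?_⟩
    intro u h
    rcases h with ⟨_, _, h3, _⟩ | ⟨_, h2⟩
    · exact h3 rfl
    · exact G.irrefl h2

instance [DecidableEq V] (G : SimpleGraph V) [DecidableRel G.Adj] (a : V) :
    DecidableRel (localComp G a).Adj := fun u v =>
  inferInstanceAs (Decidable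
    ((G.Adj a u ∧ G.Adj a v ∧ u ≠ v ∧ ¬ G.Adj u v) ∨
      ((¬ (G.Adj a u ∧ G.Adj a v)) ∧ G.Adj u v)))

/-- The induced subgraph of `G` on the vertices satisfying `P`. -/
def inducedSub (G : SimpleGraph V) (P : V → Prop) : SimpleGraph {v : V // P v} :=
  SimpleGraph.comap Subtype.val G

instance (G : SimpleGraph V) [DecidableRel G.Adj] (P : V → Prop) :
    DecidableRel (inducedSub G P).Adj := fun u v =>
  inferInstanceAs (Decidable (G.Adj u.1 v.1))

/-- The eigenvectors `|Z,+⟩ = |0⟩`, `|Z,-⟩ = |1⟩` of Pauli `Z`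
(`s = false` the `+1`-eigenvector, `s = true` the `-1`-eigenvector). -/
def zVec (s : Bool) : Bool → ℂ := fun c => if c = s then 1 else 0

/-- The eigenvectors `|X,±⟩ = (|0⟩ ± |1⟩)/√2` of Pauli `X`
(`s = false` the `+1`-eigenvector, `s = true` the `-1`-eigenvector). -/
def xVec (s : Bool) : Bool → ℂ :=
  fun c => ((Real.sqrt 2 : ℝ) : ℂ)⁻¹ * (if c && s then -1 else 1)

/-- The eigenvectors `|Y,±⟩ = (|0⟩ ± i|1⟩)/√2` of Pauli `Y`
(`s = false` the `+1`-eigenvector, `s = true` the `-1`-eigenvector). -/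
def yVec (s : Bool) : Bool → ℂ :=
  fun c => ((Real.sqrt 2 : ℝ) : ℂ)⁻¹ *
    (if c then (if s then -Complex.I else Complex.I) else 1)

/-- The rank-one projector `|v⟩⟨v|` on qubit `a` (identity elsewhere),
for a single-qubit vector `v`. -/
def projDir [DecidableEq V] (a : V) (v : Bool → ℂ) (ψ : QState V) : QState V :=
  fun x => v (x a) *
    (starRingEnd ℂ (v false) * ψ (Function.update x a false) +
      starRingEnd ℂ (v true) * ψ (Function.update x a true))

/-- The tensor product `|v⟩^{(a)} ⊗ |φ⟩` of a single-qubit state on qubit `a` with a state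
on the remaining qubits. -/
def tensorQubit [DecidableEq V] (a : V) (v : Bool → ℂ) (φ : QState {u : V // u ≠ a}) :
    QState V :=
  fun x => v (x a) * φ (fun u => x u.1)

/-- Apply a single-qubit gate with matrix entries `m r c = ⟨r|M|c⟩` on qubit `a`. -/
def applyGate [DecidableEq V] (a : V) (m : Bool → Bool → ℂ) (ψ : QState V) : QState V :=
  fun x => m (x a) false * ψ (Function.update x a false) +
    m (x a) true * ψ (Function.update x a true)

/-- The square roots `√(±iY) = (I ± iY)/√2`
(`s = false` for `√(+iY)`, `s = true` for `√(-iY)`). -/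
def sqrtiY (s : Bool) : Bool → Bool → ℂ :=
  fun r c => ((Real.sqrt 2 : ℝ) : ℂ)⁻¹ *
    (if s then (if r = false ∧ c = true then -1 else 1)
     else (if r = true ∧ c = false then -1 else 1))

/-- The Hadamard gate. -/
def hadamard : Bool → Bool → ℂ :=
  fun r c => ((Real.sqrt 2 : ℝ) : ℂ)⁻¹ * (if r && c then -1 else 1)

/-- Apply a tensor product of single-qubit gates, one on each qubit. -/
def applyLocal [Fintype V] [DecidableEq V] (u : V → Bool → Bool → ℂ) (ψ : QState V) :
    QState V :=
  fun x => ∑ y : V → Bool, (∏ v, u v (x v) (y v)) * ψ y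

/-- `2×2` matrix multiplication (matrices as `Bool → Bool → ℂ`). -/
def matMul2 (a b : Bool → Bool → ℂ) : Bool → Bool → ℂ :=
  fun r c => ∑ k : Bool, a r k * b k c

/-- Adjoint of a `2×2` matrix. -/
def matAdj2 (a : Bool → Bool → ℂ) : Bool → Bool → ℂ := fun r c => starRingEnd ℂ (a c r)

def idMat : Bool → Bool → ℂ := fun r c => if r = c then 1 else 0
def xMat : Bool → Bool → ℂ := fun r c => if r = c then 0 else 1
def yMat : Bool → Bool → ℂ := fun r c => if r = c then 0 else if r then Complex.I else -Complex.I
def zMat : Bool → Bool → ℂ := fun r c => if r = c then (if r then -1 else 1) else 0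

/-- A `2×2` matrix is unitary. -/
def IsUnitary2 (u : Bool → Bool → ℂ) : Prop := matMul2 (matAdj2 u) u = idMat

/-- A single-qubit Clifford unitary: a unitary conjugating `X` and `Z` into
`i^k·P` with `P` a Pauli matrix. -/
def IsClifford1 (u : Bool → Bool → ℂ) : Prop :=
  IsUnitary2 u ∧
    (∃ (k : ℕ) (P : Bool → Bool → ℂ), P ∈ ({idMat, xMat, yMat, zMat} : Set _) ∧
      matMul2 (matMul2 u xMat) (matAdj2 u) = Complex.I ^ k • P) ∧
    (∃ (k : ℕ) (P : Bool → Bool → ℂ), P ∈ ({idMat, xMat, yMat, zMat} : Set _) ∧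
      matMul2 (matMul2 u zMat) (matAdj2 u) = Complex.I ^ k • P)

/-- The action of the `n`-qubit Pauli operator `c · ⨂_v X^{xv v} Z^{zv v}`. -/
def pauliAction [Fintype V] (c : ℂ) (xv zv : V → Bool) (ψ : QState V) : QState V :=
  fun s => c * (∏ v, if zv v && (xor (s v) (xv v)) then (-1 : ℂ) else 1) *
    ψ (fun v => xor (s v) (xv v))

/-- The outer product `|ψ⟩⟨φ|` as a matrix on configurations. -/
def outer (ψ φ : QState V) : (V → Bool) → (V → Bool) → ℂ :=
  fun x y => ψ x * starRingEnd ℂ (φ y)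

open Classical in
/-- Partial trace keeping the qubits that satisfy `P` (tracing out the others). -/
def ptraceKeep [Fintype V] [DecidableEq V] (P : V → Prop)
    (ρ : (V → Bool) → (V → Bool) → ℂ) :
    ({v : V // P v} → Bool) → ({v : V // P v} → Bool) → ℂ :=
  fun x y => ∑ z : {v : V // ¬ P v} → Bool,
    ρ (fun w => if h : P w then x ⟨w, h⟩ else z ⟨w, h⟩)
      (fun w => if h : P w then y ⟨w, h⟩ else z ⟨w, h⟩)

open Classical in
/-- Apply a product of single-qubit bras `⟨bra v|` to each qubit `v` satisfying `P`,
leaving a state on the remaining qubits. -/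
def applyBras [Fintype V] [DecidableEq V] (P : V → Prop) (bra : V → Bool → ℂ)
    (ψ : QState V) : QState {v : V // ¬ P v} :=
  fun x => ∑ z : {v : V // P v} → Bool,
    (∏ v : {v : V // P v}, bra v.1 (z v)) *
      ψ (fun w => if h : P w then z ⟨w, h⟩ else x ⟨w, h⟩)

/-- A density operator: hermitian, trace one, positive semidefinite. -/
def IsDensityOp {α : Type*} [Fintype α] [DecidableEq α]
    (ρ : (α → Bool) → (α → Bool) → ℂ) : Prop :=
  (∀ x y, starRingEnd ℂ (ρ y x) = ρ x y) ∧ (∑ x, ρ x x = 1) ∧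
    ∀ ψ : (α → Bool) → ℂ, ∃ r : ℝ, 0 ≤ r ∧
      (∑ x, ∑ y, starRingEnd ℂ (ψ x) * ρ x y * ψ y) = (r : ℂ)

open Classical in
/-- Separability of an operator on the qubits indexed by `α` with respect to the
bipartition `(A, Aᶜ)`: a finite convex combination of tensor products of density
operators. -/
def SeparableWrt {α : Type*} [Fintype α] [DecidableEq α] (A : Set α)
    (ρ : (α → Bool) → (α → Bool) → ℂ) : Prop :=
  ∃ (k : ℕ) (p : Fin k → ℝ)
    (σ : Fin k → ({a : α // a ∈ A} → Bool) → ({a : α // a ∈ A} → Bool) → ℂ)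
    (τ : Fin k → ({a : α // a ∉ A} → Bool) → ({a : α // a ∉ A} → Bool) → ℂ),
    (∀ i, 0 ≤ p i) ∧ (∑ i, p i = 1) ∧
    (∀ i, IsDensityOp (σ i)) ∧ (∀ i, IsDensityOp (τ i)) ∧
    ∀ x y, ρ x y = ∑ i, (p i : ℂ) *
      (σ i (fun a => x a.1) (fun a => y a.1) * τ i (fun a => x a.1) (fun a => y a.1))


instance {α : Type*} [DecidableEq α] (r : α → α → Prop) [DecidableRel r] :
    DecidableRel (SimpleGraph.fromRel r).Adj := fun a b =>
  inferInstanceAs (Decidable (a ≠ b ∧ (r a b ∨ r b a)))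

/-- The line graph on `{1, …, n}` (as `Fin n`) with edges between consecutive vertices. -/
def lineGraph (n : ℕ) : SimpleGraph (Fin n) :=
  SimpleGraph.fromRel (fun i j => (i : ℕ) + 1 = (j : ℕ))

instance (n : ℕ) : DecidableRel (lineGraph n).Adj := fun a b =>
  inferInstanceAs (Decidable (a ≠ b ∧ ((a : ℕ) + 1 = (b : ℕ) ∨ (b : ℕ) + 1 = (a : ℕ))))

/-- The extension `I_R ⊗ s` of an operator `s` on `n` qubits by the identity on an extra
reference qubit labelled `0`. -/
def liftOp {n : ℕ} (s : QState (Fin n) → QState (Fin n)) (ψ : QState (Fin (n + 1))) :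
    QState (Fin (n + 1)) :=
  fun x => s (fun y => ψ (Fin.cons (x 0) y)) (fun k => x k.succ)

end

/-! The amplitude of `|G⟩` at a configuration `x` is `2^{-n/2}` times the sign
`(-1)^{#edges of G inside supp x}`. Local complementation at `v` multiplies this sign by
`(-1)^{C(m,2)}`, where `m = #(N_v ∩ supp x)`; switching `x_v` on multiplies it by `(-1)^m`;
deleting a vertex outside the support leaves it unchanged. Write `x` as a configuration `z`
vanishing at `a` and `k` with the values `c = x_a`, `r = x_k` put back. Then both sides of
the identity are `2^{-(n+1)/2} · xVec b c · graphSign G z` times a combination of signs that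
depends only on `r` and on the numbers `p, q, g` of support vertices of `z` in `N_a ∖ N_k`,
`N_k ∖ N_a` and `N_a ∩ N_k`. The binomial exponents of the three local complementations add
up to `pq + qg + gp` modulo 2, apart from terms linear in `x_k`, and what is left is an
identity between signs that is checked on the parities of `p, q, g`. -/

open Finset Function

lemma Finset.prod_symmDiff_of_mul_self {α M : Type*} [DecidableEq α] [CommMonoid M]
    {f : α → M} (hf : ∀ a, f a * f a = 1) (s t : Finset α) :
    ∏ a ∈ symmDiff s t, f a = (∏ a ∈ s, f a) * ∏ a ∈ t, f a := by
  have hsq : (∏ a ∈ s ∩ t, f a) * ∏ a ∈ s ∩ t, f a = 1 := by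
    rw [← prod_mul_distrib]
    exact prod_eq_one fun a _ => hf a
  have hunion : s ∪ t = symmDiff s t ∪ s ∩ t := (symmDiff_sup_inf s t).symm
  rw [← prod_union_inter, hunion, prod_union (by simpa using disjoint_symmDiff_inf s t),
    mul_assoc, hsq, mul_one]

lemma Finset.card_filter_not_isDiag_sym2 {α : Type*} [DecidableEq α] (s : Finset α) :
    #{e ∈ s.sym2 | ¬e.IsDiag} = (#s).choose 2 := by
  have hdiag : {e ∈ s.sym2 | e.IsDiag} = s.map ⟨Sym2.diag, Sym2.diag_injective⟩ := by
    ext e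
    induction e using Sym2.ind with
    | _ u w =>
      simp only [mem_filter, mk_mem_sym2_iff, Sym2.mk_isDiag_iff, mem_map,
        Embedding.coeFn_mk, Sym2.diag, Sym2.eq_iff]
      constructor
      · rintro ⟨⟨hu, -⟩, rfl⟩
        exact ⟨u, hu, by simp⟩
      · rintro ⟨c, hc, ⟨rfl, rfl⟩ | ⟨rfl, rfl⟩⟩ <;> exact ⟨⟨hc, hc⟩, rfl⟩
  have hsplit := card_filter_add_card_filter_not (s := s.sym2) (p := Sym2.IsDiag)
  have hchoose : (#s + 1).choose 2 = #s + (#s).choose 2 := by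
    simpa using Nat.choose_succ_succ' (#s) 1
  rw [hdiag, card_map, card_sym2, hchoose] at hsplit
  omega

lemma Finset.card_symmDiff_eq {α : Type*} [DecidableEq α] (s t : Finset α) :
    #(symmDiff s t) = #(s \ t) + #(t \ s) := by
  rw [symmDiff_def, sup_eq_union, card_union_of_disjoint disjoint_sdiff_sdiff]

lemma Fintype.card_subtype_ne_add_one {α : Type*} [Fintype α] [DecidableEq α] (a : α) :
    Fintype.card {v // v ≠ a} + 1 = Fintype.card α := by
  rw [Fintype.card_subtype_compl, Fintype.card_subtype_eq]
  have := Fintype.card_pos_iff.mpr ⟨a⟩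
  omega

lemma Nat.add_choose_two (m n : ℕ) : (m + n).choose 2 = m.choose 2 + n.choose 2 + m * n := by
  rw [Nat.add_choose_eq]
  simp [Finset.Nat.antidiagonal_succ]
  ring

section Signs

variable {V : Type*}

lemma edgeSign_eq_neg_one {x : V → Bool} {e : Sym2 V} (h : ∀ u ∈ e, x u) :
    edgeSign x e = -1 := by
  induction e using Sym2.ind with
  | _ u w => simp [edgeSign, h u (Sym2.mem_mk_left u w), h w (Sym2.mem_mk_right u w)]

lemma edgeSign_eq_one_of_mem {x : V → Bool} {e : Sym2 V} {u : V} (hu : u ∈ e)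
    (hx : x u = false) : edgeSign x e = 1 := by
  induction e using Sym2.ind with
  | _ c d => rcases Sym2.mem_iff.mp hu with rfl | rfl <;> simp [edgeSign, hx]

lemma edgeSign_mul_self (x : V → Bool) (e : Sym2 V) : edgeSign x e * edgeSign x e = 1 := by
  induction e using Sym2.ind with
  | _ u w =>
    simp only [edgeSign, Sym2.lift_mk]
    split_ifs <;> norm_num

lemma edgeSign_update_of_notMem [DecidableEq V] {x : V → Bool} {v : V} {e : Sym2 V}
    (he : v ∉ e) (t : Bool) : edgeSign (update x v t) e = edgeSign x e := by
  induction e using Sym2.ind with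
  | _ u w =>
    simp only [Sym2.mem_iff, not_or] at he
    simp [edgeSign, update_of_ne (Ne.symm he.1), update_of_ne (Ne.symm he.2)]

lemma prod_edgeSign_filter_not_isDiag_sym2 [DecidableEq V] (s : Finset V) (x : V → Bool) :
    ∏ e ∈ s.sym2 with ¬e.IsDiag, edgeSign x e = (-1) ^ (#{v ∈ s | x v}).choose 2 := by
  rw [← card_filter_not_isDiag_sym2, ← prod_const]
  symm
  refine (prod_congr rfl fun e he => (edgeSign_eq_neg_one ?_).symm).trans (prod_subset ?_ ?_)
  · simp only [mem_filter, mem_sym2_iff] at he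
    exact fun u hu => (he.1 u hu).2
  · intro e he
    simp only [mem_filter, mem_sym2_iff] at he ⊢
    exact ⟨fun u hu => (he.1 u hu).1, he.2⟩
  · intro e he hne
    simp only [mem_filter, mem_sym2_iff, not_and] at he hne
    have : ¬ ∀ u ∈ e, x u = true := fun h => hne (fun u hu => ⟨he.1 u hu, h u hu⟩) he.2
    obtain ⟨u, hu, hxu⟩ := not_forall₂.mp this
    exact edgeSign_eq_one_of_mem hu (by simpa using hxu)

def zSign (s : Finset V) (x : V → Bool) : ℂ := ∏ v ∈ s, if x v then -1 else 1

lemma pauliZProd_apply (s : Finset V) (ψ : QState V) (x : V → Bool) :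
    pauliZProd s ψ x = zSign s x * ψ x :=
  rfl

lemma zSign_eq_neg_one_pow (s : Finset V) (x : V → Bool) :
    zSign s x = (-1) ^ #{v ∈ s | x v} := by
  simp [zSign, prod_ite]

lemma zSign_update_of_notMem [DecidableEq V] {s : Finset V} {k : V} (hk : k ∉ s)
    (x : V → Bool) (t : Bool) : zSign s (update x k t) = zSign s x :=
  prod_congr rfl fun v hv => by rw [update_of_ne (ne_of_mem_of_not_mem hv hk)]

lemma zSign_comp_val {P : V → Prop} (s : Finset {v // P v}) (x : V → Bool) :
    zSign s (fun u => x u.1) = zSign (s.map (Embedding.subtype P)) x := by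
  rw [zSign, zSign, prod_map]
  rfl

lemma card_filter_update_of_notMem [DecidableEq V] {s : Finset V} {k : V} (hk : k ∉ s)
    (z : V → Bool) (t : Bool) : #{v ∈ s | update z k t v} = #{v ∈ s | z v} := by
  congr 1
  exact filter_congr fun v hv => by rw [update_of_ne (ne_of_mem_of_not_mem hv hk)]

lemma card_filter_update_of_mem [DecidableEq V] {s : Finset V} {k : V} (hk : k ∈ s)
    {z : V → Bool} (hz : z k = false) (t : Bool) :
    #{v ∈ s | update z k t v} = #{v ∈ s | z v} + t.toNat := by
  have hrest := card_filter_update_of_notMem (notMem_erase k s) z t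
  rw [← insert_erase hk, filter_insert, filter_insert, update_self, hz]
  cases t <;> simp_all [card_insert_of_notMem]

lemma exists_update_update_eq [DecidableEq V] {a k : V} (hak : a ≠ k) (x : V → Bool) :
    ∃ z r c, z a = false ∧ z k = false ∧ x = update (update z k r) a c := by
  refine ⟨update (update x a false) k false, x k, x a, by simp [hak], by simp, ?_⟩
  funext v
  by_cases hva : v = a
  · simp [hva]
  · by_cases hvk : v = k
    · simp [hvk, Ne.symm hak]
    · simp [hva, hvk]

end Signs

lemma localComp_adj {V : Type*} (Γ : SimpleGraph V) (v u w : V) :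
    (localComp Γ v).Adj u w ↔
      (Γ.Adj v u ∧ Γ.Adj v w ∧ u ≠ w ∧ ¬ Γ.Adj u w) ∨
        (¬ (Γ.Adj v u ∧ Γ.Adj v w) ∧ Γ.Adj u w) :=
  Iff.rfl

section GraphSign

variable {V : Type*} [Fintype V] [DecidableEq V] (Γ : SimpleGraph V) [DecidableRel Γ.Adj]

def graphSign (x : V → Bool) : ℂ := ∏ e ∈ Γ.edgeFinset, edgeSign x e

lemma graphState_apply (x : V → Bool) :
    graphState Γ x = ((Real.sqrt 2 : ℝ) : ℂ)⁻¹ ^ Fintype.card V * graphSign Γ x :=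
  rfl

lemma localComp_edgeFinset (v : V) :
    (localComp Γ v).edgeFinset =
      symmDiff Γ.edgeFinset {e ∈ (Γ.neighborFinset v).sym2 | ¬e.IsDiag} := by
  ext e
  induction e using Sym2.ind with
  | _ u w =>
    have hne : Γ.Adj u w → u ≠ w := SimpleGraph.Adj.ne
    simp only [mem_symmDiff, mem_filter, mk_mem_sym2_iff, Sym2.mk_isDiag_iff,
      SimpleGraph.mem_edgeFinset, SimpleGraph.mem_edgeSet, SimpleGraph.mem_neighborFinset,
      localComp_adj]
    tauto

lemma localComp_neighborFinset_of_adj {v u : V} (h : Γ.Adj v u) :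
    (localComp Γ v).neighborFinset u =
      symmDiff (Γ.neighborFinset u) ((Γ.neighborFinset v).erase u) := by
  ext w
  have hne : Γ.Adj u w → u ≠ w := SimpleGraph.Adj.ne
  have := h.symm
  have : w ≠ u ↔ u ≠ w := ne_comm
  simp only [SimpleGraph.mem_neighborFinset, mem_symmDiff, mem_erase, localComp_adj]
  tauto

lemma graphSign_localComp (v : V) (x : V → Bool) :
    graphSign (localComp Γ v) x =
      (-1) ^ (#{u ∈ Γ.neighborFinset v | x u}).choose 2 * graphSign Γ x := by
  rw [graphSign, localComp_edgeFinset, prod_symmDiff_of_mul_self (edgeSign_mul_self x),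
    prod_edgeSign_filter_not_isDiag_sym2, graphSign, mul_comm]

lemma filter_mem_edgeFinset_eq_image (v : V) :
    {e ∈ Γ.edgeFinset | v ∈ e} = (Γ.neighborFinset v).image (fun w => s(v, w)) := by
  ext e
  induction e using Sym2.ind with
  | _ u w =>
    simp only [mem_filter, SimpleGraph.mem_edgeFinset, SimpleGraph.mem_edgeSet, Sym2.mem_iff,
      mem_image, SimpleGraph.mem_neighborFinset]
    constructor
    · rintro ⟨hadj, rfl | rfl⟩
      · exact ⟨w, hadj, rfl⟩
      · exact ⟨u, hadj.symm, Sym2.eq_swap⟩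
    · rintro ⟨b, hb, heq⟩
      rcases Sym2.eq_iff.mp heq with ⟨rfl, rfl⟩ | ⟨rfl, rfl⟩
      · exact ⟨hb, Or.inl rfl⟩
      · exact ⟨hb.symm, Or.inr rfl⟩

lemma graphSign_update_true (v : V) (x : V → Bool) :
    graphSign Γ (update x v true) =
      zSign (Γ.neighborFinset v) x * graphSign Γ (update x v false) := by
  have hinj : Set.InjOn (fun w => s(v, w)) (Γ.neighborFinset v) :=
    fun _ _ _ _ h => Sym2.congr_right.mp h
  have hsplit : ∀ y : V → Bool, graphSign Γ y =
      (∏ w ∈ Γ.neighborFinset v, edgeSign y s(v, w)) *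
        ∏ e ∈ Γ.edgeFinset with v ∉ e, edgeSign y e := fun y => by
    rw [graphSign, ← prod_filter_mul_prod_filter_not Γ.edgeFinset (v ∈ ·),
      filter_mem_edgeFinset_eq_image, prod_image hinj]
  have hfar : ∀ t, ∏ e ∈ Γ.edgeFinset with v ∉ e, edgeSign (update x v t) e =
      ∏ e ∈ Γ.edgeFinset with v ∉ e, edgeSign x e := fun t =>
    prod_congr rfl fun e he => edgeSign_update_of_notMem (mem_filter.mp he).2 t
  have hnear : ∀ t, ∏ w ∈ Γ.neighborFinset v, edgeSign (update x v t) s(v, w) =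
      if t then zSign (Γ.neighborFinset v) x else 1 := fun t => by
    cases t
    · exact prod_eq_one fun w _ => edgeSign_eq_one_of_mem (Sym2.mem_mk_left v w) (by simp)
    · refine prod_congr rfl fun w hw => ?_
      have hwv : w ≠ v := (Γ.ne_of_adj ((Γ.mem_neighborFinset v w).mp hw)).symm
      simp [edgeSign, update_of_ne hwv]
  rw [hsplit, hsplit, hfar, hfar, hnear, hnear]
  simp

lemma graphSign_update_of_eq_false {x : V → Bool} {v : V} (hx : x v = false) (t : Bool) :
    graphSign Γ (update x v t) =
      (-1) ^ (t.toNat * #{u ∈ Γ.neighborFinset v | x u}) * graphSign Γ x := by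
  have hx' : update x v false = x := by rw [← hx, update_eq_self]
  cases t
  · simp [hx']
  · simp [graphSign_update_true, hx', zSign_eq_neg_one_pow]

lemma graphSign_inducedSub (P : V → Prop) [DecidablePred P] (x : V → Bool)
    (hx : ∀ v, ¬ P v → x v = false) :
    graphSign (inducedSub Γ P) (fun u => x u.1) = graphSign Γ x := by
  have hmap : ∀ e, edgeSign (fun u : {v // P v} => x u.1) e = edgeSign x (e.map Subtype.val) := by
    intro e
    induction e using Sym2.ind with
    | _ u w => rfl
  rw [graphSign, graphSign, prod_congr rfl fun e _ => hmap e,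
    ← prod_image (Sym2.map.injective Subtype.val_injective).injOn]
  apply prod_subset
  · intro e he
    obtain ⟨e', he', rfl⟩ := mem_image.mp he
    induction e' using Sym2.ind with
    | _ u w =>
      rw [SimpleGraph.mem_edgeFinset, SimpleGraph.mem_edgeSet] at he'
      rw [Sym2.map_mk, SimpleGraph.mem_edgeFinset, SimpleGraph.mem_edgeSet]
      exact he'
  · intro e he hne
    induction e using Sym2.ind with
    | _ u w =>
      by_cases hu : P u
      · by_cases hw : P w
        · refine absurd (mem_image.mpr ⟨s((⟨u, hu⟩ : {v // P v}), ⟨w, hw⟩), ?_, rfl⟩)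
            hne
          rw [SimpleGraph.mem_edgeFinset, SimpleGraph.mem_edgeSet] at he ⊢
          exact he
        · exact edgeSign_eq_one_of_mem (Sym2.mem_mk_right u w) (hx w hw)
      · exact edgeSign_eq_one_of_mem (Sym2.mem_mk_left u w) (hx u hu)

end GraphSign

lemma localComp_localComp_adj_iff {V : Type*} (G : SimpleGraph V) {a k b : V}
    (hak : G.Adj a k) (hb : b ≠ a) :
    (localComp (localComp G k) a).Adj k b ↔ G.Adj a b ∧ b ≠ k := by
  have := hak.symm
  have := hak.ne
  have := G.loopless.irrefl
  simp only [localComp_adj]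
  by_cases hbk : b = k
  · subst hbk
    tauto
  · have := Ne.symm hbk
    tauto

lemma neg_one_pow_choose_two_triangle (p q g : ℕ) (t : Bool) :
    (-1 : ℂ) ^ (p + g).choose 2 * (-1) ^ (p + q + t.toNat).choose 2 * (-1) ^ (q + g).choose 2 *
        (-1) ^ (t.toNat * (q + g)) =
      (-1) ^ (p * q + q * g + g * p + t.toNat * (p + g)) := by
  have hexp : (p + g).choose 2 + (p + q + t.toNat).choose 2 + (q + g).choose 2 +
      t.toNat * (q + g) = p * q + q * g + g * p + t.toNat * (p + g) +
        2 * (p.choose 2 + q.choose 2 + g.choose 2 + t.toNat * q) := by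
    cases t <;> simp [Nat.add_choose_two] <;> ring
  rw [← pow_add, ← pow_add, ← pow_add, hexp, pow_add, pow_mul]
  simp

lemma conj_xVec (b c : Bool) : starRingEnd ℂ (xVec b c) = xVec b c := by
  simp [xVec, apply_ite (starRingEnd ℂ)]

lemma xVec_sqrtiY_sign_identity (b r : Bool) (p q g : ℕ) :
    xVec b false * (-1) ^ (r.toNat * (q + g)) +
        xVec b true * ((-1) ^ (p + g + r.toNat) * (-1) ^ (r.toNat * (q + g))) =
      (-1) ^ (cond b q p) * (sqrtiY b r false * (-1) ^ (p * q + q * g + g * p) +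
        sqrtiY b r true * (-1) ^ (p * q + q * g + g * p + (p + g))) := by
  rcases Nat.even_or_odd p with hp | hp <;> rcases Nat.even_or_odd q with hq | hq <;>
    rcases Nat.even_or_odd g with hg | hg <;> cases b <;> cases r <;>
    simp [xVec, sqrtiY, pow_add, pow_mul, hp.neg_one_pow, hq.neg_one_pow, hg.neg_one_pow]

lemma map_neighborFinset_inducedSub_localComp_localComp {V : Type*} [Fintype V] [DecidableEq V]
    (G : SimpleGraph V) [DecidableRel G.Adj] {a k : V} (hak : G.Adj a k) :
    ((inducedSub (localComp (localComp G k) a) (· ≠ a)).neighborFinset ⟨k, hak.ne'⟩).map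
      (Embedding.subtype _) = (G.neighborFinset a).erase k := by
  ext v
  simp only [mem_map, SimpleGraph.mem_neighborFinset, Embedding.coe_subtype, mem_erase]
  constructor
  · rintro ⟨u, hu, rfl⟩
    exact ((localComp_localComp_adj_iff G hak u.2).mp hu).symm
  · rintro ⟨hvk, hv⟩
    exact ⟨⟨v, hv.ne'⟩, (localComp_localComp_adj_iff G hak hv.ne').mpr ⟨hv, hvk⟩, rfl⟩

section XMeasurement

variable {V : Type*} [Fintype V] [DecidableEq V] (G : SimpleGraph V) [DecidableRel G.Adj]
  {a k : V} (hak : G.Adj a k)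

abbrev xMeasuredGraph : SimpleGraph {v : V // v ≠ a} :=
  localComp (inducedSub (localComp (localComp G k) a) (· ≠ a)) ⟨k, hak.ne'⟩

variable (a k) in
abbrev xCorrectionSet (b : Bool) : Finset {v : V // v ≠ a} :=
  cond b (univ.filter fun u : {v : V // v ≠ a} => G.Adj k u.1 ∧ ¬ G.Adj a u.1)
    (univ.filter fun u : {v : V // v ≠ a} => G.Adj a u.1 ∧ ¬ G.Adj k u.1 ∧ u.1 ≠ k)

include hak in
lemma graphSign_xMeasuredGraph {z : V → Bool} (hza : z a = false) (hzk : z k = false) (t : Bool) :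
    graphSign (xMeasuredGraph G hak) (update (fun u => z u.1) ⟨k, hak.ne'⟩ t) =
      (-1) ^ (#{v ∈ G.neighborFinset a | z v}).choose 2 *
        (-1) ^ (#(symmDiff {v ∈ G.neighborFinset a | z v} {v ∈ G.neighborFinset k | z v}) +
          t.toNat).choose 2 *
        (-1) ^ (#{v ∈ G.neighborFinset k | z v}).choose 2 *
        (-1) ^ (t.toNat * #{v ∈ G.neighborFinset k | z v}) * graphSign G z := by
  have hy : update (fun u : {v // v ≠ a} => z u.1) ⟨k, hak.ne'⟩ t =
      fun u => update z k t u.1 :=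
    (update_comp_eq_of_injective z Subtype.val_injective _ t).symm
  have hwa : ∀ v, ¬ v ≠ a → update z k t v = false := fun v hv => by
    rw [not_not.mp hv, update_of_ne hak.ne, hza]
  have hcard_k' : #{u ∈ (inducedSub (localComp (localComp G k) a) (· ≠ a)).neighborFinset
      ⟨k, hak.ne'⟩ | update z k t u.1} = #{v ∈ G.neighborFinset a | z v} := by
    trans #{v ∈ ((inducedSub (localComp (localComp G k) a) (· ≠ a)).neighborFinset
      ⟨k, hak.ne'⟩).map (Embedding.subtype _) | update z k t v}
    · rw [filter_map, card_map]
      rfl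
    rw [map_neighborFinset_inducedSub_localComp_localComp G hak,
      card_filter_update_of_notMem (notMem_erase k _), filter_erase,
      erase_eq_of_notMem (by simp [hzk])]
  have hcard_a : #{v ∈ (localComp G k).neighborFinset a | update z k t v} =
      #(symmDiff {v ∈ G.neighborFinset a | z v} {v ∈ G.neighborFinset k | z v}) + t.toNat := by
    rw [localComp_neighborFinset_of_adj G hak.symm, card_filter_update_of_mem _ hzk]
    · congr 2
      ext v
      by_cases hva : v = a
      · simp [hva, hza, mem_symmDiff]
      · by_cases hzv : z v <;> simp [mem_symmDiff, hva, hzv]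
    · simp [mem_symmDiff, hak]
  have hcard_k : #{v ∈ G.neighborFinset k | update z k t v} = #{v ∈ G.neighborFinset k | z v} :=
    card_filter_update_of_notMem (by simp) z t
  rw [hy, graphSign_localComp, graphSign_inducedSub _ _ _ hwa, hcard_k', graphSign_localComp,
    hcard_a, graphSign_localComp, hcard_k, graphSign_update_of_eq_false G hzk]
  ring

include hak in
lemma zSign_xCorrectionSet {z : V → Bool} (hza : z a = false) (hzk : z k = false) (b t : Bool) :
    zSign (xCorrectionSet G a k b) (update (fun u => z u.1) ⟨k, hak.ne'⟩ t) =
      (-1) ^ #(cond b ({v ∈ G.neighborFinset k | z v} \ {v ∈ G.neighborFinset a | z v})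
        ({v ∈ G.neighborFinset a | z v} \ {v ∈ G.neighborFinset k | z v})) := by
  have hk : (⟨k, hak.ne'⟩ : {v // v ≠ a}) ∉ xCorrectionSet G a k b := by
    cases b <;> simp
  rw [zSign_update_of_notMem hk, zSign_comp_val, zSign_eq_neg_one_pow]
  congr 2
  ext v
  by_cases hva : v = a
  · subst hva
    cases b <;> simp [hza]
  · by_cases hvk : v = k
    · subst hvk
      cases b <;> simp [hzk]
    · by_cases hzv : z v <;> cases b <;> simp [hva, hvk, hzv]

include hak in
theorem projDir_xVec_graphState (b : Bool) :
    projDir a (xVec b) (graphState G) =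
      ((Real.sqrt 2 : ℝ) : ℂ)⁻¹ • tensorQubit a (xVec b)
        (applyGate (⟨k, hak.ne'⟩ : {v : V // v ≠ a}) (sqrtiY b)
          (pauliZProd (xCorrectionSet G a k b) (graphState (xMeasuredGraph G hak)))) := by
  funext x
  obtain ⟨z, r, c, hza, hzk, rfl⟩ := exists_update_update_eq hak.ne x
  set s : ℂ := ((Real.sqrt 2 : ℝ) : ℂ)⁻¹
  have hwa : update (update z k r) a false = update z k r := by
    rw [update_eq_self_iff, update_of_ne hak.ne, hza]
  have hy : (fun u : {v // v ≠ a} => update (update z k r) a c u.1) =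
      update (fun u => z u.1) ⟨k, hak.ne'⟩ r := by
    funext u
    rw [update_of_ne u.2]
    exact congrFun (update_comp_eq_of_injective z Subtype.val_injective ⟨k, hak.ne'⟩ r) u
  simp only [projDir, tensorQubit, applyGate, pauliZProd_apply, graphState_apply, Pi.smul_apply,
    smul_eq_mul, update_self, update_idem, hwa, hy, conj_xVec, update_of_ne hak.ne']
  rw [graphSign_update_true, hwa, zSign_eq_neg_one_pow,
    card_filter_update_of_mem (by simpa using hak) hzk, graphSign_update_of_eq_false G hzk,
    zSign_xCorrectionSet G hak hza hzk, zSign_xCorrectionSet G hak hza hzk,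
    graphSign_xMeasuredGraph G hak hza hzk, graphSign_xMeasuredGraph G hak hza hzk]
  set A := {v ∈ G.neighborFinset a | z v}
  set K := {v ∈ G.neighborFinset k | z v}
  have hA : #A = #(A \ K) + #(A ∩ K) := (card_sdiff_add_card_inter A K).symm
  have hK : #K = #(K \ A) + #(A ∩ K) := by
    rw [inter_comm]
    exact (card_sdiff_add_card_inter K A).symm
  rw [hA, hK, card_symmDiff_eq, neg_one_pow_choose_two_triangle, neg_one_pow_choose_two_triangle,
    ← Fintype.card_subtype_ne_add_one a, Bool.apply_cond card]
  simp only [Bool.toNat_false, Bool.toNat_true, zero_mul, one_mul, add_zero]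
  linear_combination (xVec b c * s ^ (Fintype.card {v // v ≠ a} + 1) * graphSign G z) *
    xVec_sqrtiY_sign_identity b r #(A \ K) #(K \ A) #(A ∩ K)

end XMeasurement

/-- Projecting qubit `a` (with `k ∈ N_a`) of a graph state onto the
Pauli-`X` eigenbasis: up to a phase,
`P_{X,±}^{(a)} |G⟩ = (1/√2) |X,±⟩^{(a)} ⊗ U_{a,X,±} |τ_k(τ_a(τ_k(G)) − a)⟩`, where
`U_{a,X,+} = √(+iY)^{(k)} ⊗ ⨂_{b∈N_a∖(N_k∪{k})} Z^{(b)}` and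
`U_{a,X,−} = √(−iY)^{(k)} ⊗ ⨂_{b∈N_k∖(N_a∪{a})} Z^{(b)}`. -/
theorem stmt4 {V : Type*} [Fintype V] [DecidableEq V]
    (G : SimpleGraph V) [DecidableRel G.Adj] (a k : V) (hak : G.Adj a k) :
    ∃ cp cm : ℂ, ‖cp‖ = 1 ∧ ‖cm‖ = 1 ∧
      projDir a (xVec false) (graphState G) =
        (cp * ((Real.sqrt 2 : ℝ) : ℂ)⁻¹) •
          tensorQubit a (xVec false)
            (applyGate (⟨k, hak.ne'⟩ : {v : V // v ≠ a}) (sqrtiY false)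
              (pauliZProd
                (Finset.univ.filter (fun b : {v : V // v ≠ a} =>
                  G.Adj a b.1 ∧ ¬ G.Adj k b.1 ∧ b.1 ≠ k))
                (graphState
                  (localComp (inducedSub (localComp (localComp G k) a) (· ≠ a))
                    ⟨k, hak.ne'⟩)))) ∧
      projDir a (xVec true) (graphState G) =
        (cm * ((Real.sqrt 2 : ℝ) : ℂ)⁻¹) •
          tensorQubit a (xVec true)
            (applyGate (⟨k, hak.ne'⟩ : {v : V // v ≠ a}) (sqrtiY true)
              (pauliZProd
                (Finset.univ.filter (fun b : {v : V // v ≠ a} =>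
                  G.Adj k b.1 ∧ ¬ G.Adj a b.1))
                (graphState
                  (localComp (inducedSub (localComp (localComp G k) a) (· ≠ a))
                    ⟨k, hak.ne'⟩)))) := by
  refine ⟨1, 1, norm_one, norm_one, ?_, ?_⟩ <;> rw [one_mul]
  · exact projDir_xVec_graphState G hak false
  · exact projDir_xVec_graphState G hak true
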